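/- Let g : ℝ → ℝ be a C¹ nonnegative function of period 1. Then ∫₀¹ g(x)^{5/2} dx ≤ C (‖g'‖_{L²[0,1]} ‖g‖_{L¹[0,1]}^{3/2} + ‖g‖_{L¹[0,1]}^{5/2}) for some universal constant C > 0. -/

import Mathlib

open intervalIntegral Set
open MeasureTheory (volume)

/-! Let `M = max g` and `m = ∫ g` over `[0,1]`. Since `(g^{3/2})' = (3/2) √g g'`, the
oscillation of `g^{3/2}` on `[0,1]` is at most `(3/2) ∫ √g |g'| ≤ (3/2) √m ‖g'‖₂`
(Cauchy–Schwarz); comparing the maximum with the mean gives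
`M^{3/2} ≤ ∫ g^{3/2} + (3/2) √m ‖g'‖₂ ≤ √M m + (3/2) √m ‖g'‖₂`. This cubic inequality in `√M`
forces `M^{3/2} ≤ 3 √m ‖g'‖₂ + 3 m^{3/2}`, and `∫ g^{5/2} ≤ M^{3/2} m`. -/

theorem intervalIntegral_abs_mul_le_sqrt_mul_sqrt {f g : ℝ → ℝ} {a b : ℝ} (hab : a ≤ b)
    (hf : Continuous f) (hg : Continuous g) :
    ∫ x in a..b, |f x * g x| ≤ √(∫ x in a..b, f x ^ 2) * √(∫ x in a..b, g x ^ 2) := by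
  set A := ∫ x in a..b, f x ^ 2
  set B := ∫ x in a..b, g x ^ 2
  set J := ∫ x in a..b, |f x * g x|
  have hA : 0 ≤ A := integral_nonneg hab fun x _ => sq_nonneg (f x)
  have hquad : ∀ t : ℝ, 0 ≤ A * (t * t) + (-2 * J) * t + B := by
    intro t
    have hexp : ∫ x in a..b, (t * |f x| - |g x|) ^ 2 = A * (t * t) + (-2 * J) * t + B := by
      have hsq : ∀ x, (t * |f x| - |g x|) ^ 2 =
          (t * t) * f x ^ 2 - (2 * t) * |f x * g x| + g x ^ 2 := fun x => by
        rw [abs_mul]; ring_nf; rw [sq_abs, sq_abs]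
      simp_rw [hsq]
      rw [integral_add, integral_sub, integral_const_mul, integral_const_mul]
      · ring
      all_goals exact Continuous.intervalIntegrable (by fun_prop) _ _
    exact hexp ▸ integral_nonneg hab fun x _ => sq_nonneg _
  have hJ : J ^ 2 ≤ A * B := by
    have := discrim_le_zero hquad
    rw [discrim] at this
    linarith
  calc J ≤ |J| := le_abs_self J
    _ ≤ √(A * B) := Real.abs_le_sqrt hJ
    _ = √A * √B := Real.sqrt_mul hA B

theorem abs_sub_le_integral_abs_deriv {F F' : ℝ → ℝ} {a b x y : ℝ}
    (hF : ∀ t ∈ Icc a b, HasDerivAt F (F' t) t) (hF' : IntervalIntegrable F' volume a b)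
    (hx : x ∈ Icc a b) (hy : y ∈ Icc a b) :
    |F x - F y| ≤ ∫ t in a..b, |F' t| := by
  wlog hyx : y ≤ x generalizing x y
  · rw [abs_sub_comm]; exact this hy hx (le_of_not_ge hyx)
  have hsub : uIcc y x ⊆ Icc a b := uIcc_subset_Icc hy hx
  rw [← integral_eq_sub_of_hasDerivAt (fun t ht => hF t (hsub ht))
    (hF'.mono_set (hsub.trans Icc_subset_uIcc))]
  calc |∫ t in y..x, F' t| ≤ ∫ t in y..x, |F' t| := abs_integral_le_integral_abs hyx
    _ ≤ ∫ t in a..b, |F' t| :=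
      integral_mono_interval hy.1 hyx hx.2 (.of_forall fun t => abs_nonneg _) hF'.abs

theorem mul_le_integral_add_mul_integral_abs_deriv {F F' : ℝ → ℝ} {a b x : ℝ}
    (hF : ∀ t ∈ Icc a b, HasDerivAt F (F' t) t) (hF' : IntervalIntegrable F' volume a b)
    (hx : x ∈ Icc a b) :
    (b - a) * F x ≤ (∫ t in a..b, F t) + (b - a) * ∫ t in a..b, |F' t| := by
  have hab : a ≤ b := hx.1.trans hx.2
  have hFc : ContinuousOn F (Icc a b) := fun t ht => (hF t ht).continuousAt.continuousWithinAt
  have hmono := integral_mono_on (μ := volume) hab intervalIntegrable_const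
    (hFc.intervalIntegrable_of_Icc hab) fun y hy =>
      (sub_le_of_abs_sub_le_right (abs_sub_le_integral_abs_deriv hF hF' hx hy) :
        F x - ∫ t in a..b, |F' t| ≤ F y)
  rw [integral_const, smul_eq_mul] at hmono
  linarith

theorem intervalIntegral_rpow_add_one_le {g : ℝ → ℝ} {a b M p : ℝ} (hab : a ≤ b)
    (hg : ContinuousOn g (Icc a b)) (hg0 : ∀ x ∈ Icc a b, 0 ≤ g x)
    (hM : ∀ x ∈ Icc a b, g x ≤ M) (hp : 0 ≤ p) :
    ∫ x in a..b, g x ^ (p + 1) ≤ M ^ p * ∫ x in a..b, g x := by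
  rw [← integral_const_mul]
  refine integral_mono_on hab ?_ ((hg.const_smul (M ^ p)).intervalIntegrable_of_Icc hab)
    fun x hx => ?_
  · exact (hg.rpow_const fun _ _ => Or.inr (by linarith)).intervalIntegrable_of_Icc hab
  rw [Real.rpow_add_one' (hg0 x hx) (by linarith)]
  exact mul_le_mul_of_nonneg_right (Real.rpow_le_rpow (hg0 x hx) (hM x hx) hp) (hg0 x hx)

theorem cube_le_of_cube_le_mul_sq_add {t s A : ℝ} (ht : 0 ≤ t) (hs : 0 ≤ s)
    (h : t ^ 3 ≤ t * s ^ 2 + A) : t ^ 3 ≤ 2 * A + 3 * s ^ 3 := by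
  rcases le_or_gt (t ^ 2) (2 * s ^ 2) with hts | hts
  · have hts' : t ≤ 3 / 2 * s := by nlinarith
    nlinarith [mul_le_mul_of_nonneg_left hts' (sq_nonneg s)]
  · nlinarith

theorem HasDerivAt.rpow_three_halves {g : ℝ → ℝ} {g' x : ℝ} (hg : HasDerivAt g g' x) :
    HasDerivAt (fun y => g y ^ ((3:ℝ)/2)) (3/2 * (√(g x) * g')) x := by
  convert hg.rpow_const (p := 3/2) (Or.inr (by norm_num)) using 1
  rw [show (3:ℝ)/2 - 1 = 1/2 by norm_num, ← Real.sqrt_eq_rpow]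
  ring

theorem mul_rpow_three_halves_le {g : ℝ → ℝ} {a b x : ℝ} (hg : ContDiff ℝ 1 g)
    (hx : x ∈ Icc a b) :
    (b - a) * g x ^ ((3:ℝ)/2) ≤
      (∫ t in a..b, g t ^ ((3:ℝ)/2)) +
        (b - a) * (3/2 * ∫ t in a..b, |√(g t) * deriv g t|) := by
  have hg' : Continuous (deriv g) := hg.continuous_deriv le_rfl
  have h := mul_le_integral_add_mul_integral_abs_deriv
    (fun t _ => (hg.differentiable one_ne_zero t).hasDerivAt.rpow_three_halves)
    (Continuous.intervalIntegrable (by fun_prop) _ _) hx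
  simpa only [abs_mul, abs_of_pos (by norm_num : (0:ℝ) < 3/2), integral_const_mul] using h

theorem stmt_11 :
    ∃ C : ℝ, 0 < C ∧ ∀ g : ℝ → ℝ, ContDiff ℝ 1 g → (∀ x : ℝ, g (x + 1) = g x) →
      (∀ x : ℝ, 0 ≤ g x) →
      (∫ x in (0:ℝ)..1, (g x) ^ ((5:ℝ)/2)) ≤
        C * (Real.sqrt (∫ x in (0:ℝ)..1, (deriv g x) ^ 2)
              * (∫ x in (0:ℝ)..1, g x) ^ ((3:ℝ)/2)
            + (∫ x in (0:ℝ)..1, g x) ^ ((5:ℝ)/2)) := by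
  refine ⟨3, by norm_num, fun g hg _ hg0 => ?_⟩
  have hgc : Continuous g := hg.continuous
  obtain ⟨x₀, hx₀, hmax⟩ :=
    isCompact_Icc.exists_isMaxOn (nonempty_Icc.2 zero_le_one) hgc.continuousOn
  set m := ∫ x in (0:ℝ)..1, g x
  set J := ∫ x in (0:ℝ)..1, |√(g x) * deriv g x|
  set e := √(∫ x in (0:ℝ)..1, deriv g x ^ 2)
  have hJ : J ≤ √m * e := by
    simpa only [Real.sq_sqrt (hg0 _)] using intervalIntegral_abs_mul_le_sqrt_mul_sqrt
      zero_le_one hgc.sqrt (hg.continuous_deriv le_rfl)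
  have hmax_rpow := mul_rpow_three_halves_le hg hx₀
  have h32 := intervalIntegral_rpow_add_one_le (p := 1/2) zero_le_one hgc.continuousOn
    (fun x _ => hg0 x) (fun x hx => hmax hx) (by norm_num)
  have h52 := intervalIntegral_rpow_add_one_le (p := 3/2) zero_le_one hgc.continuousOn
    (fun x _ => hg0 x) (fun x hx => hmax hx) (by norm_num)
  have hm0 : 0 ≤ m := integral_nonneg zero_le_one fun x _ => hg0 x
  have hm : m = √m ^ 2 := (Real.sq_sqrt hm0).symm
  rw [show (1:ℝ)/2 + 1 = 3/2 by norm_num, ← Real.sqrt_eq_rpow] at h32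
  rw [show (3:ℝ)/2 + 1 = 5/2 by norm_num] at h52
  simp only [Real.rpow_div_two_eq_sqrt _ (hg0 x₀), Real.rpow_div_two_eq_sqrt _ hm0,
    Real.rpow_ofNat, sub_zero, one_mul] at hmax_rpow h52 ⊢
  have hcube := cube_le_of_cube_le_mul_sq_add (Real.sqrt_nonneg (g x₀)) (Real.sqrt_nonneg m)
    (A := 3/2 * J) (by rw [← hm]; linarith)
  calc ∫ x in (0:ℝ)..1, g x ^ ((5:ℝ)/2)
      ≤ √(g x₀) ^ 3 * m := h52
    _ ≤ (3 * J + 3 * √m ^ 3) * m := by gcongr; linarith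
    _ ≤ (3 * (√m * e) + 3 * √m ^ 3) * m := by gcongr
    _ = 3 * (e * √m ^ 3 + √m ^ 5) := by linear_combination (3 * √m * e + 3 * √m ^ 3) * hm
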